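/- Let X, Y be locally convex Hausdorff real topological vector spaces and F : X × Y → ℝ ∪ {±∞}. Assume (H₂): inf_{x∈X} F(x,0) = inf_{x∈X} F**(x,0) ≠ +∞. Then the S_F-procedure is valid if and only if the set {(x',s) ∈ X* × ℝ : ∃μ ∈ Y*, F*(x',μ) ≤ s} is weak*-closed regarding {(0_{X*},0)}. -/

import Mathlib

/-
Under (H₂), `F(·, 0) ≥ 0` amounts to `F**(·, 0) ≥ 0`, and `F**(x, 0)` is the support function
`σ_C(x, -1)` of `C = {(x', s) | ∃ μ, F*(x', μ) ≤ s}`. The point `(0, 0)` lies in the weak*-closure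
of the convex set `C` iff `σ_C(·, -1) ≥ 0`: one direction because `(x', s) ↦ x' x - s` is
weak*-continuous, the other by separating `(0, 0)` from `cl C` with a hyperplane
`x' x₀ + r s = u`, whose normal `x₀` lies in `X` because `X` is the dual of its weak* dual.
Finally `λ` witnesses the conclusion of the `S_F`-procedure iff `F*(0, -λ) ≤ 0`, i.e.
`(0, 0) ∈ C`; so validity says exactly `(0, 0) ∈ cl C → (0, 0) ∈ C`.
-/

variable {X Y : Type*}
  [AddCommGroup X] [Module ℝ X] [TopologicalSpace X] [IsTopologicalAddGroup X]
  [ContinuousSMul ℝ X] [LocallyConvexSpace ℝ X] [T2Space X]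
  [AddCommGroup Y] [Module ℝ Y] [TopologicalSpace Y] [IsTopologicalAddGroup Y]
  [ContinuousSMul ℝ Y] [LocallyConvexSpace ℝ Y] [T2Space Y]

/-- Fenchel conjugate of `F : X × Y → ℝ̄`, with first dual variable in the
weak* dual of `X`. -/
noncomputable def wConj (F : X → Y → EReal) (x' : WeakDual ℝ X) (y' : Y →L[ℝ] ℝ) : EReal :=
  ⨆ p : X × Y, (((x' p.1 + y' p.2 : ℝ) : EReal) - F p.1 p.2)

/-- Fenchel biconjugate of `F : X × Y → ℝ̄` on `X × Y`. -/
noncomputable def wBiconj (F : X → Y → EReal) (x : X) (y : Y) : EReal :=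
  ⨆ w : WeakDual ℝ X × (Y →L[ℝ] ℝ), (((w.1 x + w.2 y : ℝ) : EReal) - wConj F w.1 w.2)

open Set

theorem EReal.coe_sub_le_iff_forall_le {a : ℝ} {v b : EReal} :
    (a : EReal) - v ≤ b ↔ ∀ s : ℝ, v ≤ s → ((a - s : ℝ) : EReal) ≤ b := by
  induction v using EReal.rec with
  | bot =>
    simp only [EReal.coe_sub_bot, top_le_iff, bot_le, forall_const]
    refine ⟨fun hb _ => hb ▸ le_top, fun h => (EReal.eq_top_iff_forall_lt b).2 fun y => ?_⟩
    calc (y : EReal) < ((y + 1 : ℝ) : EReal) := by exact_mod_cast lt_add_one y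
      _ = ((a - (a - y - 1) : ℝ) : EReal) := by ring_nf
      _ ≤ b := h _
  | coe v =>
    refine ⟨fun h s hs => le_trans ?_ h, fun h => by exact_mod_cast h v le_rfl⟩
    have : v ≤ s := by exact_mod_cast hs
    exact_mod_cast (by linarith : a - s ≤ a - v)
  | top => simp

theorem EReal.coe_sub_le_coe_iff {a s : ℝ} {v : EReal} :
    (a : EReal) - v ≤ s ↔ ((a - s : ℝ) : EReal) ≤ v := by
  induction v using EReal.rec with
  | bot => simp only [EReal.coe_sub_bot, top_le_iff, EReal.coe_ne_top, le_bot_iff, EReal.coe_ne_bot]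
  | coe v =>
    norm_cast
    constructor <;> intro h <;> linarith
  | top => simp

section WeakDual

variable {E : Type*} [AddCommGroup E] [Module ℝ E] [TopologicalSpace E]

instance WeakDual.instLocallyConvexSpace : LocallyConvexSpace ℝ (WeakDual ℝ E) :=
  WeakBilin.locallyConvexSpace

@[simp]
theorem WeakDual.zero_apply (x : E) : (0 : WeakDual ℝ E) x = 0 := rfl

theorem WeakDual.exists_eq_apply_add_mul (f : WeakDual ℝ E × ℝ →L[ℝ] ℝ) :
    ∃ (x₀ : E) (r : ℝ), ∀ z : WeakDual ℝ E × ℝ, f z = z.1 x₀ + r * z.2 := by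
  obtain ⟨x₀, hx₀⟩ := LinearMap.dualEmbedding_surjective (topDualPairing ℝ E)
    (f.comp (ContinuousLinearMap.inl ℝ (WeakDual ℝ E) ℝ))
  refine ⟨x₀, f (0, 1), fun z => ?_⟩
  have hfst : f (z.1, 0) = z.1 x₀ := (congrArg (· z.1) hx₀).symm
  calc f z = f ((z.1, 0) + z.2 • ((0 : WeakDual ℝ E), (1 : ℝ))) := by congr 1; ext <;> simp
    _ = z.1 x₀ + f (0, 1) * z.2 := by rw [map_add, map_smul, hfst, smul_eq_mul, mul_comm]

/-- The support function `σ_C (x, -1)` of `C ⊆ X* × ℝ`, with `X` seen as the dual of `X*`. -/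
noncomputable def epiSupport (C : Set (WeakDual ℝ E × ℝ)) (x : E) : EReal :=
  ⨆ z ∈ C, ((z.1 x - z.2 : ℝ) : EReal)

variable {C : Set (WeakDual ℝ E × ℝ)}

theorem coe_sub_le_epiSupport {z : WeakDual ℝ E × ℝ} (hz : z ∈ C) (x : E) :
    ((z.1 x - z.2 : ℝ) : EReal) ≤ epiSupport C x :=
  le_iSup₂ (f := fun z (_ : z ∈ C) => ((z.1 x - z.2 : ℝ) : EReal)) z hz

theorem coe_sub_le_epiSupport_of_mem_closure {z : WeakDual ℝ E × ℝ} (hz : z ∈ closure C)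
    (x : E) : ((z.1 x - z.2 : ℝ) : EReal) ≤ epiSupport C x := by
  have hcont : Continuous fun z : WeakDual ℝ E × ℝ => ((z.1 x - z.2 : ℝ) : EReal) :=
    continuous_coe_real_ereal.comp
      (((WeakDual.eval_continuous x).comp continuous_fst).sub continuous_snd)
  exact closure_minimal (fun z hz => coe_sub_le_epiSupport hz x)
    (isClosed_le hcont continuous_const) hz

theorem epiSupport_nonneg_of_mem_closure (h : ((0 : WeakDual ℝ E), (0 : ℝ)) ∈ closure C)
    (x : E) : 0 ≤ epiSupport C x := by
  simpa using coe_sub_le_epiSupport_of_mem_closure h x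

/-- A hyperplane `x' x₀ + r s = u` strictly separating `(0, 0)` from `C` has `u < 0`, and
`r ≤ 0` since `C` is upward closed. Adding `β` times its inequality to `x' xb - s ≤ σ_C(xb)`,
with `β u = -(σ_C(xb) + 1)`, shows `σ_C < 0` at `(1 - β r)⁻¹ • (xb + β • x₀)`. -/
theorem zero_mem_closure_of_epiSupport_nonneg (hC : Convex ℝ C)
    (hup : ∀ z ∈ C, ∀ t : ℝ, z.2 ≤ t → (z.1, t) ∈ C) {xb : E} (hxb : epiSupport C xb ≠ ⊤)
    (h0 : ∀ x, 0 ≤ epiSupport C x) : ((0 : WeakDual ℝ E), (0 : ℝ)) ∈ closure C := by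
  by_contra h
  obtain ⟨f, u, hfC, hu⟩ := geometric_hahn_banach_closed_point hC.closure isClosed_closure h
  obtain ⟨x₀, r, hf⟩ := WeakDual.exists_eq_apply_add_mul f
  have hsep : ∀ z ∈ C, z.1 x₀ + r * z.2 < u := fun z hz => hf z ▸ hfC z (subset_closure hz)
  replace hu : u < 0 := by simpa [hf] using hu
  set M := (epiSupport C xb).toReal
  have hM : epiSupport C xb = M :=
    (EReal.coe_toReal hxb ((h0 xb).trans_lt' EReal.bot_lt_zero).ne').symm
  have hM0 : 0 ≤ M := EReal.toReal_nonneg (h0 xb)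
  have hr : r ≤ 0 := by
    obtain ⟨z, hz⟩ : C.Nonempty := by
      by_contra hne
      simp [not_nonempty_iff_eq_empty.1 hne, epiSupport] at hM
    by_contra! hr
    have := hsep _ (hup z hz _ (le_max_left z.2 ((u - z.1 x₀) / r)))
    have := (div_le_iff₀ hr).1 (le_max_right z.2 ((u - z.1 x₀) / r))
    linarith
  obtain ⟨β, hβ, hβu⟩ : ∃ β : ℝ, 0 ≤ β ∧ β * u = -(M + 1) :=
    ⟨(M + 1) / -u, div_nonneg (by linarith) (by linarith), by field_simp [hu.ne]⟩
  have hd : 0 < 1 - β * r := by nlinarith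
  have hneg : epiSupport C ((1 - β * r)⁻¹ • (xb + β • x₀)) ≤ ((-(1 - β * r)⁻¹ : ℝ) : EReal) := by
    refine iSup₂_le fun z hz => EReal.coe_le_coe_iff.2 ?_
    have h1 : z.1 xb - z.2 ≤ M := by exact_mod_cast (coe_sub_le_epiSupport hz xb).trans hM.le
    have h2 := hsep z hz
    simp only [map_smul, map_add, smul_eq_mul]
    rw [← sub_nonneg]
    have : 0 ≤ (1 - β * r)⁻¹ * (-(z.1 xb - z.2 - M) - β * (z.1 x₀ + r * z.2 - u)) :=
      mul_nonneg (inv_nonneg.2 hd.le) (by nlinarith)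
    convert this using 1
    field_simp
    linear_combination -hβu
  have : (0 : ℝ) ≤ -(1 - β * r)⁻¹ := by exact_mod_cast (h0 _).trans hneg
  linarith [inv_pos.2 hd]

end WeakDual

theorem Set.inter_singleton_eq_inter_singleton_iff {α : Type*} {s t : Set α} {a : α} :
    s ∩ {a} = t ∩ {a} ↔ (a ∈ s ↔ a ∈ t) := by
  simp only [Set.ext_iff, mem_inter_iff, mem_singleton_iff]
  exact ⟨fun h => by simpa using h a, fun h x => by constructor <;> rintro ⟨hx, rfl⟩ <;> tauto⟩

section Conjugate

variable {E V : Type*} [AddCommGroup E] [Module ℝ E] [TopologicalSpace E]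
  [AddCommGroup V] [Module ℝ V] [TopologicalSpace V] (F : E → V → EReal)

def projEpiConj : Set (WeakDual ℝ E × ℝ) :=
  {z | ∃ μ : V →L[ℝ] ℝ, wConj F z.1 μ ≤ (z.2 : EReal)}

theorem wConj_le_coe_iff {x' : WeakDual ℝ E} {μ : V →L[ℝ] ℝ} {s : ℝ} :
    wConj F x' μ ≤ s ↔ ∀ x y, ((x' x + μ y - s : ℝ) : EReal) ≤ F x y := by
  simp only [wConj, iSup_le_iff, Prod.forall, EReal.coe_sub_le_coe_iff]

theorem convex_projEpiConj : Convex ℝ (projEpiConj F) := by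
  rintro z₁ ⟨μ₁, h₁⟩ z₂ ⟨μ₂, h₂⟩ a b ha hb hab
  refine ⟨a • μ₁ + b • μ₂, (wConj_le_coe_iff F).2 fun x y => ?_⟩
  have hcombo := Convex.combo_le_max (z₁.1 x + μ₁ y - z₁.2) (z₂.1 x + μ₂ y - z₂.2) ha hb hab
  refine le_trans (EReal.coe_le_coe_iff.2 (le_of_eq_of_le ?_ hcombo))
    (max_le ((wConj_le_coe_iff F).1 h₁ x y) ((wConj_le_coe_iff F).1 h₂ x y))
  have hx' : (a • z₁.1 + b • z₂.1) x = a * z₁.1 x + b * z₂.1 x := rfl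
  simp only [Prod.fst_add, Prod.snd_add, Prod.smul_fst, Prod.smul_snd, hx',
    add_apply, smul_apply, smul_eq_mul]
  ring

theorem mk_mem_projEpiConj {z : WeakDual ℝ E × ℝ} (hz : z ∈ projEpiConj F) {t : ℝ}
    (ht : z.2 ≤ t) : (z.1, t) ∈ projEpiConj F :=
  let ⟨μ, hμ⟩ := hz; ⟨μ, hμ.trans (EReal.coe_le_coe_iff.2 ht)⟩

theorem wBiconj_zero_eq_epiSupport (x : E) :
    wBiconj F x 0 = epiSupport (projEpiConj F) x := by
  apply le_antisymm
  · refine iSup_le fun w => EReal.coe_sub_le_iff_forall_le.2 fun s hs => ?_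
    simpa using coe_sub_le_epiSupport (C := projEpiConj F) (z := (w.1, s)) ⟨w.2, hs⟩ x
  · refine iSup₂_le fun z ⟨μ, hμ⟩ => ?_
    have := le_iSup (fun w : WeakDual ℝ E × (V →L[ℝ] ℝ) =>
      ((w.1 x + w.2 0 : ℝ) : EReal) - wConj F w.1 w.2) (z.1, μ)
    simpa [wBiconj] using EReal.coe_sub_le_iff_forall_le.1 this z.2 hμ

theorem exists_nonneg_add_iff_zero_mem_projEpiConj :
    (∃ lam : V →L[ℝ] ℝ, ∀ x y, 0 ≤ F x y + ((lam y : ℝ) : EReal)) ↔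
      ((0 : WeakDual ℝ E), (0 : ℝ)) ∈ projEpiConj F := by
  have hnonneg (v : EReal) (c : ℝ) : 0 ≤ v + c ↔ ((-c : ℝ) : EReal) ≤ v := by
    rw [← EReal.sub_nonneg (Or.inr (EReal.coe_ne_top _)) (Or.inr (EReal.coe_ne_bot _)),
      EReal.coe_neg, sub_eq_add_neg, neg_neg]
  simp only [projEpiConj, mem_ofPred_eq, wConj_le_coe_iff, WeakDual.zero_apply, zero_add, sub_zero,
    hnonneg]
  exact ⟨fun ⟨lam, h⟩ => ⟨-lam, by simpa using h⟩, fun ⟨μ, h⟩ => ⟨-μ, by simpa using h⟩⟩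

end Conjugate

/-- Corollary 3.1 under hypothesis `(H₂)`: the `S_F`-procedure is valid iff the
projection of `epi F*` on `X* × ℝ` is weak*-closed regarding `{(0, 0)}`. -/
theorem stmt_13 (F : X → Y → EReal)
    (H2 : (⨅ x : X, F x 0) = (⨅ x : X, wBiconj F x 0) ∧ (⨅ x : X, F x 0) ≠ ⊤) :
    ((∀ x : X, 0 ≤ F x 0) →
        ∃ lam : Y →L[ℝ] ℝ, ∀ (x : X) (y : Y), 0 ≤ F x y + ((lam y : ℝ) : EReal)) ↔
      closure {z : WeakDual ℝ X × ℝ | ∃ μ : Y →L[ℝ] ℝ, wConj F z.1 μ ≤ (z.2 : EReal)} ∩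
          {((0 : WeakDual ℝ X), (0 : ℝ))} =
        {z : WeakDual ℝ X × ℝ | ∃ μ : Y →L[ℝ] ℝ, wConj F z.1 μ ≤ (z.2 : EReal)} ∩
          {((0 : WeakDual ℝ X), (0 : ℝ))} := by
  obtain ⟨hinf, hfin⟩ := H2
  have hσ := wBiconj_zero_eq_epiSupport F
  obtain ⟨xb, hxb⟩ : ∃ xb, epiSupport (projEpiConj F) xb ≠ ⊤ := by
    simpa [iInf_eq_top, hinf, hσ] using hfin
  have hclosure : (∀ x, 0 ≤ F x 0) ↔ ((0 : WeakDual ℝ X), (0 : ℝ)) ∈ closure (projEpiConj F) := by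
    rw [← le_iInf_iff, hinf, le_iInf_iff]
    simp only [hσ]
    exact ⟨zero_mem_closure_of_epiSupport_nonneg (convex_projEpiConj F)
      (fun z hz _ => mk_mem_projEpiConj F hz) hxb, epiSupport_nonneg_of_mem_closure⟩
  change _ ↔ closure (projEpiConj F) ∩ _ = projEpiConj F ∩ _
  rw [Set.inter_singleton_eq_inter_singleton_iff, hclosure,
    exists_nonneg_add_iff_zero_mem_projEpiConj]
  exact ⟨fun h => ⟨h, fun h0 => subset_closure h0⟩, Iff.mp⟩
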